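/- arXiv:0807.4288 — 9 statements merged into one kernel-verified Lean document; each statement's English description precedes it below -/
import Mathlib

section
/- Let (X, d_X) and (Y, d_Y) be compact metric spaces, and equip X × Y with the ℓ¹ product metric d((x,y),(x',y')) = d_X(x,x') + d_Y(y,y'). Suppose T : X × Y → X × Y is distance-preserving for this metric and the first coordinate of T(x,y) does not depend on y (i.e. for all x ∈ X and y, y' ∈ Y the first components of T(x,y) and T(x,y') coincide). Then T is a product isometry: there exist a surjective distance-preserving map h : X → X and a surjective distance-preserving map k : Y → Y such that T(x,y) = (h(x), k(y)) for all x ∈ X, y ∈ Y. -/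
/-- A distance-preserving self-map of a compact metric space is surjective. -/
lemma surjective_of_isometry_compact {α : Type*} [MetricSpace α] [CompactSpace α]
    (f : α → α) (hf : ∀ a b, dist (f a) (f b) = dist a b) : Function.Surjective f := by
  have hiter : ∀ (n : ℕ) (a b : α), dist (f^[n] a) (f^[n] b) = dist a b := by
    intro n
    induction n with
    | zero => simp
    | succ n ih =>
        intro a b
        rw [Function.iterate_succ_apply', Function.iterate_succ_apply', hf, ih]
  by_contra hns
  simp only [Function.Surjective, not_forall] at hns
  obtain ⟨x, hx⟩ := hns
  have hcont : Continuous f := (Isometry.of_dist_eq hf).continuous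
  have hclosed : IsClosed (Set.range f) := (isCompact_range hcont).isClosed
  have hne : (Set.range f).Nonempty := ⟨f x, ⟨x, rfl⟩⟩
  have hxnot : x ∉ Set.range f := by
    rintro ⟨a, rfl⟩; exact hx ⟨a, rfl⟩
  have hpos : 0 < Metric.infDist x (Set.range f) :=
    (hclosed.notMem_iff_infDist_pos hne).mp hxnot
  set δ := Metric.infDist x (Set.range f) with hδ
  -- the orbit is δ-separated
  have hsep : ∀ m n : ℕ, m < n → δ ≤ dist (f^[m] x) (f^[n] x) := by
    intro m n hmn
    have h1 : f^[n] x = f^[m] (f^[n - m] x) := by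
      rw [← Function.iterate_add_apply]
      congr 1
      omega
    rw [h1, hiter]
    apply Metric.infDist_le_dist_of_mem
    obtain ⟨j, hj⟩ : ∃ j, n - m = j + 1 := ⟨n - m - 1, by omega⟩
    rw [hj, Function.iterate_succ_apply']
    exact ⟨_, rfl⟩
  obtain ⟨a, -, φ, hφ, hconv⟩ :=
    isCompact_univ.tendsto_subseq (x := fun n => f^[n] x) (fun n => Set.mem_univ _)
  have hcauchy : CauchySeq fun n => f^[φ n] x := hconv.cauchySeq
  rw [Metric.cauchySeq_iff] at hcauchy
  obtain ⟨N, hN⟩ := hcauchy δ hpos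
  have hlt : φ N < φ (N + 1) := hφ (Nat.lt_succ_self N)
  have h2 := hN (N + 1) (Nat.le_succ N) N le_rfl
  rw [dist_comm] at h2
  exact absurd (hsep _ _ hlt) (not_le.mpr h2)

/-- A distance-preserving self-map of the ℓ¹ product `X × Y` of compact metric spaces whose
first coordinate does not depend on the `Y`-variable is a product isometry. -/
theorem product_isometry_of_first_factor_preserving
    {X Y : Type*} [MetricSpace X] [MetricSpace Y] [CompactSpace X] [CompactSpace Y]
    (T : X × Y → X × Y)
    (hT : ∀ p q : X × Y,
      dist (T p).1 (T q).1 + dist (T p).2 (T q).2 = dist p.1 q.1 + dist p.2 q.2)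
    (hfirst : ∀ (x : X) (y y' : Y), (T (x, y)).1 = (T (x, y')).1) :
    ∃ (h : X → X) (k : Y → Y),
      Function.Surjective h ∧ Function.Surjective k ∧
      (∀ x x' : X, dist (h x) (h x') = dist x x') ∧
      (∀ y y' : Y, dist (k y) (k y') = dist y y') ∧
      ∀ (x : X) (y : Y), T (x, y) = (h x, k y) := by
  by_cases hX : Nonempty X
  · by_cases hY : Nonempty Y
    · obtain ⟨x₀⟩ := hX
      obtain ⟨y₀⟩ := hY
      set h : X → X := fun x => (T (x, y₀)).1 with hh
      -- key equation
      have E : ∀ (x x' : X) (y y' : Y),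
          dist (h x) (h x') + dist (T (x, y)).2 (T (x', y')).2 = dist x x' + dist y y' := by
        intro x x' y y'
        have := hT (x, y) (x', y')
        rwa [hfirst x y y₀, hfirst x' y' y₀] at this
      -- h shrinks distances
      have hle : ∀ x x' : X, dist (h x) (h x') ≤ dist x x' := by
        intro x x'
        have := E x x' y₀ y₀
        simp only [dist_self, add_zero] at this
        nlinarith [dist_nonneg (x := (T (x, y₀)).2) (y := (T (x', y₀)).2)]
      -- diameter achieved on Y
      obtain ⟨⟨a, b⟩, -, hab⟩ := isCompact_univ.exists_isMaxOn
        ⟨(y₀, y₀), Set.mem_univ _⟩ (continuous_dist.comp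
          (continuous_fst.prodMk continuous_snd)).continuousOn
      have hab' : ∀ y y' : Y, dist y y' ≤ dist a b := fun y y' =>
        hab (Set.mem_univ (y, y'))
      -- h is an isometry
      have hiso : ∀ x x' : X, dist (h x) (h x') = dist x x' := by
        intro x x'
        refine le_antisymm (hle x x') ?_
        have := E x x' a b
        have h2 : dist (T (x, a)).2 (T (x', b)).2 ≤ dist a b := hab' _ _
        linarith
      -- second coordinate is an isometry in full
      have E2 : ∀ (x x' : X) (y y' : Y),
          dist (T (x, y)).2 (T (x', y')).2 = dist y y' := by
        intro x x' y y'
        have := E x x' y y'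
        rw [hiso] at this
        linarith
      set k : Y → Y := fun y => (T (x₀, y)).2 with hk
      have hTk : ∀ (x : X) (y : Y), (T (x, y)).2 = k y := by
        intro x y
        have := E2 x x₀ y y
        simp only [dist_self] at this
        exact dist_le_zero.mp (le_of_eq this)
      have kiso : ∀ y y' : Y, dist (k y) (k y') = dist y y' := fun y y' => E2 x₀ x₀ y y'
      refine ⟨h, k, surjective_of_isometry_compact h hiso,
        surjective_of_isometry_compact k kiso, hiso, kiso, ?_⟩
      intro x y
      ext
      · exact hfirst x y y₀
      · exact hTk x y
    · refine ⟨id, fun y => y, Function.surjective_id, fun y => absurd ⟨y⟩ hY, ?_, ?_, ?_⟩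
      · intro x x'; rfl
      · intro y; exact absurd ⟨y⟩ hY
      · intro x y; exact absurd ⟨y⟩ hY
  · refine ⟨fun x => x, id, fun x => absurd ⟨x⟩ hX, Function.surjective_id, ?_, ?_, ?_⟩
    · intro x; exact absurd ⟨x⟩ hX
    · intro y y'; rfl
    · intro x; exact absurd ⟨x⟩ hX
end

section
/- Let G be a compact Hausdorff topological group and let S ⊆ G be a nonempty closed subset that is closed under multiplication (a closed subsemigroup). Then S is closed under taking inverses; in particular S is a compact subgroup of G. -/
/-!
In a compact group every power `a ^ m`, `m : ℤ`, of `a` is a cluster point of the sequence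
`a ^ n`, `n → ∞` (`mapClusterPt_self_zpow_atTop_pow`). If `a` lies in a closed set `S` closed
under multiplication, the positive powers of `a` stay in `S`, hence so do their cluster points,
in particular `a⁻¹`.
-/

open Filter

theorem MapClusterPt.mem_of_isClosed {α X : Type*} [TopologicalSpace X] {F : Filter α}
    {u : α → X} {x : X} {S : Set X} (hx : MapClusterPt x F u) (hS : IsClosed S)
    (hu : ∀ᶠ i in F, u i ∈ S) : x ∈ S :=
  hS.closure_subset <| mem_closure_iff_clusterPt.2 <| ClusterPt.mono hx (le_principal_iff.2 hu)

theorem pow_succ_mem_of_mul_mem {M : Type*} [Monoid M] {S : Set M}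
    (hmul : ∀ a ∈ S, ∀ b ∈ S, a * b ∈ S) {a : M} (ha : a ∈ S) (n : ℕ) : a ^ (n + 1) ∈ S := by
  induction n with
  | zero => simpa using ha
  | succ n ih => simpa only [pow_succ] using hmul _ ih a ha

theorem zpow_mem_of_isClosed_of_eventually_pow_mem {G : Type*} [Group G] [TopologicalSpace G]
    [IsTopologicalGroup G] [CompactSpace G] {S : Set G} (hS : IsClosed S) {a : G}
    (h : ∀ᶠ n : ℕ in atTop, a ^ n ∈ S) (m : ℤ) : a ^ m ∈ S :=
  (mapClusterPt_self_zpow_atTop_pow a m).mem_of_isClosed hS h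

theorem inv_mem_of_isClosed_of_mul_mem {G : Type*} [Group G] [TopologicalSpace G]
    [IsTopologicalGroup G] [CompactSpace G] {S : Set G} (hS : IsClosed S)
    (hmul : ∀ a ∈ S, ∀ b ∈ S, a * b ∈ S) {a : G} (ha : a ∈ S) : a⁻¹ ∈ S := by
  have hpow : ∀ᶠ n : ℕ in atTop, a ^ n ∈ S := by
    filter_upwards [eventually_ge_atTop 1] with n hn
    obtain ⟨k, rfl⟩ := Nat.exists_eq_add_of_le' hn
    exact pow_succ_mem_of_mul_mem hmul ha k
  simpa using zpow_mem_of_isClosed_of_eventually_pow_mem hS hpow (-1)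

theorem closed_subsemigroup_of_compact_group_is_subgroup_general
    {G : Type*} [Group G] [TopologicalSpace G] [IsTopologicalGroup G]
    [CompactSpace G]
    (S : Set G) (hclosed : IsClosed S)
    (hmul : ∀ a ∈ S, ∀ b ∈ S, a * b ∈ S) :
    (∀ a ∈ S, a⁻¹ ∈ S) ∧ IsCompact S :=
  ⟨fun _ ha => inv_mem_of_isClosed_of_mul_mem hclosed hmul ha, hclosed.isCompact⟩

/-- A nonempty closed subsemigroup of a compact Hausdorff topological group is closed under
taking inverses; in particular it is a compact subgroup. -/
theorem closed_subsemigroup_of_compact_group_is_subgroup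
    {G : Type*} [Group G] [TopologicalSpace G] [IsTopologicalGroup G]
    [CompactSpace G] [T2Space G]
    (S : Set G) (hne : S.Nonempty) (hclosed : IsClosed S)
    (hmul : ∀ a ∈ S, ∀ b ∈ S, a * b ∈ S) :
    (∀ a ∈ S, a⁻¹ ∈ S) ∧ IsCompact S :=
  closed_subsemigroup_of_compact_group_is_subgroup_general S hclosed hmul
end

section
/- Let A be a unital C*-algebra and let q₀, q₁ ∈ A be self-adjoint elements such that q₁² = 1 and such that for every t ∈ [0,1] one has 0 ≤ q₀ + t·q₁ ≤ 1 in the canonical order of A. Then q₀ = (1 − q₁)/2. In particular, writing P = (1 + q₁)/2, the element P is a self-adjoint projection, q₀ = 1 − P, and q₀ commutes with q₁. -/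
/-! Put `e = 1 + q₁`. Since `e * q₁ = e`, conjugating `0 ≤ q₀` and `0 ≤ 1 - (q₀ + q₁)`
by `e` gives `0 ≤ e q₀ e` and `0 ≤ -(e q₀ e)`, so `e q₀ e = 0`, and the C*-identity
upgrades this to `q₀ e = 0`. The substitution `(q₀, q₁) ↦ (1 - q₀, -q₁)` preserves the
hypotheses and yields `(1 - q₀)(1 - q₁) = 0`; subtracting the two identities gives
`2 q₀ = 1 - q₁`. -/

lemma mul_eq_zero_of_nonneg_of_star_mul_mul_eq_zero {A : Type*} [NonUnitalCStarAlgebra A]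
    [PartialOrder A] [StarOrderedRing A] {a b : A} (ha : 0 ≤ a)
    (h : star b * a * b = 0) : a * b = 0 := by
  have hsqrt : CFC.sqrt a * b = 0 := by
    rw [← norm_eq_zero, ← sq_eq_zero_iff, ← CFC.norm_star_mul_mul_self_of_nonneg b ha,
      h, norm_zero]
  rw [← CFC.sqrt_mul_sqrt_self a ha, mul_assoc, hsqrt, mul_zero]

lemma mul_one_add_eq_zero_of_nonneg_of_add_le_one {A : Type*} [CStarAlgebra A] [PartialOrder A]
    [StarOrderedRing A] {a u : A} (hu : IsSelfAdjoint u)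
    (hu2 : u ^ 2 = 1) (ha : 0 ≤ a) (hau : a + u ≤ 1) : a * (1 + u) = 0 := by
  set e := 1 + u
  have he : star e = e := ((IsSelfAdjoint.one A).add hu).star_eq
  have heu : e * u = e := by rw [add_mul, one_mul, ← sq, hu2, add_comm]
  have hconj : star e * (1 - (a + u)) * e = -(star e * a * e) := by
    rw [he]
    calc e * (1 - (a + u)) * e = e * e - e * a * e - e * u * e := by noncomm_ring
      _ = -(e * a * e) := by rw [heu]; abel
  have hzero : star e * a * e = 0 := by
    refine le_antisymm ?_ (star_left_conjugate_nonneg ha e)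
    rw [← neg_nonneg, ← hconj]
    exact star_left_conjugate_nonneg (sub_nonneg.2 hau) e
  exact mul_eq_zero_of_nonneg_of_star_mul_mul_eq_zero ha hzero

lemma IsSelfAdjoint.isStarProjection_inv_two_smul_one_add {A : Type*} [Ring A] [StarRing A]
    [Algebra ℝ A] [StarModule ℝ A] {u : A} (hu : IsSelfAdjoint u) (hu2 : u ^ 2 = 1) :
    IsStarProjection ((2 : ℝ)⁻¹ • (1 + u)) := by
  refine ⟨?_, (IsSelfAdjoint.all _).smul ((IsSelfAdjoint.one A).add hu)⟩
  have hsq : (1 + u) * (1 + u) = (2 : ℝ) • (1 + u) := by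
    rw [two_smul, add_mul, mul_add, mul_add, one_mul, mul_one, one_mul, ← sq u, hu2]
    abel
  rw [IsIdempotentElem, smul_mul_smul_comm, hsq, smul_smul]
  norm_num

theorem selfadjoint_reflection_order_constraint_general
    {A : Type*} [CStarAlgebra A] [PartialOrder A] [StarOrderedRing A]
    (q₀ q₁ : A) (h₁ : IsSelfAdjoint q₁)
    (hq₁ : q₁ ^ 2 = 1)
    (hord : ∀ t : ℝ, t ∈ Set.Icc (0 : ℝ) 1 →
      (0 : A) ≤ q₀ + t • q₁ ∧ q₀ + t • q₁ ≤ 1) :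
    q₀ = (2 : ℝ)⁻¹ • (1 - q₁) ∧
    IsSelfAdjoint ((2 : ℝ)⁻¹ • (1 + q₁)) ∧
    IsIdempotentElem ((2 : ℝ)⁻¹ • (1 + q₁)) ∧
    q₀ = 1 - (2 : ℝ)⁻¹ • (1 + q₁) ∧
    Commute q₀ q₁ := by
  obtain ⟨hq₀_nonneg, hq₀_le⟩ := hord 0 ⟨le_rfl, zero_le_one⟩
  obtain ⟨hsum_nonneg, hsum_le⟩ := hord 1 ⟨zero_le_one, le_rfl⟩
  simp only [zero_smul, add_zero, one_smul] at hq₀_nonneg hq₀_le hsum_nonneg hsum_le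
  have hplus : q₀ * (1 + q₁) = 0 :=
    mul_one_add_eq_zero_of_nonneg_of_add_le_one h₁ hq₁ hq₀_nonneg hsum_le
  have hminus : (1 - q₀) * (1 + -q₁) = 0 :=
    mul_one_add_eq_zero_of_nonneg_of_add_le_one h₁.neg (by rwa [neg_sq])
      (sub_nonneg.2 hq₀_le)
      (by rw [← sub_eq_add_neg, sub_sub, sub_le_self_iff]; exact hsum_nonneg)
  have hq₀ : q₀ = (2 : ℝ)⁻¹ • (1 - q₁) := by
    have htwo : (2 : ℝ) • q₀ - (1 - q₁) = q₀ * (1 + q₁) - (1 - q₀) * (1 + -q₁) := by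
      rw [two_smul]
      noncomm_ring
    rw [hplus, hminus, sub_zero, sub_eq_zero] at htwo
    rw [← htwo, smul_smul]
    norm_num
  have hP := h₁.isStarProjection_inv_two_smul_one_add hq₁
  refine ⟨hq₀, hP.isSelfAdjoint, hP.isIdempotentElem, by rw [hq₀]; module, ?_⟩
  rw [hq₀]
  exact ((Commute.one_left q₁).sub_left (Commute.refl q₁)).smul_left _

/-- If `q₀, q₁` are self-adjoint elements of a unital C*-algebra with `q₁² = 1` and
`0 ≤ q₀ + t·q₁ ≤ 1` for all `t ∈ [0,1]`, then `q₀ = (1 - q₁)/2`; in particular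
`P = (1 + q₁)/2` is a self-adjoint projection, `q₀ = 1 - P`, and `q₀` commutes with `q₁`. -/
theorem selfadjoint_reflection_order_constraint
    {A : Type*} [CStarAlgebra A] [PartialOrder A] [StarOrderedRing A]
    (q₀ q₁ : A) (h₀ : IsSelfAdjoint q₀) (h₁ : IsSelfAdjoint q₁)
    (hq₁ : q₁ ^ 2 = 1)
    (hord : ∀ t : ℝ, t ∈ Set.Icc (0 : ℝ) 1 →
      (0 : A) ≤ q₀ + t • q₁ ∧ q₀ + t • q₁ ≤ 1) :
    q₀ = (2 : ℝ)⁻¹ • (1 - q₁) ∧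
    IsSelfAdjoint ((2 : ℝ)⁻¹ • (1 + q₁)) ∧
    IsIdempotentElem ((2 : ℝ)⁻¹ • (1 + q₁)) ∧
    q₀ = 1 - (2 : ℝ)⁻¹ • (1 + q₁) ∧
    Commute q₀ q₁ :=
  selfadjoint_reflection_order_constraint_general q₀ q₁ h₁ hq₁ hord
end

section
/- Let A be a unital C*-algebra and let (a_n)_{n∈ℤ} be elements of A such that for every z in the unit circle S¹ ⊂ ℂ the family (zⁿ·a_n)_{n∈ℤ} is summable in norm, with sum F(z) = Σ_{n∈ℤ} zⁿ a_n, each F(z) is a unitary in A, and for all z, w ∈ S¹ one has F(z)·F(w)* + F(z)*·F(w) = (z·conj(w) + conj(z)·w)·1. Then a_n = 0 for every n ∉ {1, −1}; consequently F(z) = z·a₁ + conj(z)·a₋₁ for all z ∈ S¹. -/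
lemma norm_one_of_pow_eq_one {x : ℝ} (h0 : 0 ≤ x) {N : ℕ} (hN : N ≠ 0) (h : x ^ N = 1) :
    x = 1 := by
  rcases lt_trichotomy x 1 with hx | hx | hx
  · exact absurd h (by simpa using (pow_lt_one₀ h0 hx hN).ne)
  · exact hx
  · exact absurd h (by simpa using (one_lt_pow₀ hx hN).ne')

/-- Root-of-unity sum: for a primitive `N`-th root `ζ` and `j : ℤ`,
`∑_{k<N} ζ^(j*k) = N` if `N ∣ j` and `0` otherwise. -/
lemma root_sum {N : ℕ} (hN : N ≠ 0) {ζ : ℂ} (hζ : IsPrimitiveRoot ζ N) (j : ℤ) :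
    ∑ k ∈ Finset.range N, ζ ^ (j * (k : ℤ)) = if (N : ℤ) ∣ j then (N : ℂ) else 0 := by
  have hrw : ∀ k ∈ Finset.range N, ζ ^ (j * (k : ℤ)) = (ζ ^ j) ^ k := by
    intro k _
    rw [zpow_mul, zpow_natCast]
  rw [Finset.sum_congr rfl hrw]
  by_cases hdvd : (N : ℤ) ∣ j
  · rw [if_pos hdvd]
    have h1 : ζ ^ j = 1 := (hζ.zpow_eq_one_iff_dvd j).mpr hdvd
    simp [h1]
  · rw [if_neg hdvd]
    have h1 : ζ ^ j ≠ 1 := fun h => hdvd ((hζ.zpow_eq_one_iff_dvd j).mp h)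
    rw [geom_sum_eq h1]
    have hNz : (ζ ^ j) ^ N = 1 := by
      rw [← zpow_natCast, ← zpow_mul, mul_comm, zpow_mul, zpow_natCast, hζ.pow_eq_one, one_zpow]
    simp [hNz]

/-- Uniqueness of Fourier coefficients for a summable `ℤ`-series in a Banach space:
if `∑ zⁿ • b n = 0` for every `z` on the unit circle, then every `b m = 0`. -/
lemma fourier_extract {A : Type*} [NormedAddCommGroup A] [NormedSpace ℂ A] [CompleteSpace A]
    (b : ℤ → A)
    (hb : ∀ z : ℂ, ‖z‖ = 1 → Summable fun n : ℤ => z ^ n • b n)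
    (h0 : ∀ z : ℂ, ‖z‖ = 1 → ∑' n : ℤ, z ^ n • b n = 0) (m : ℤ) : b m = 0 := by
  classical
  have hb1 : Summable b := by simpa using hb 1 (by simp)
  rw [← norm_eq_zero]
  refine le_antisymm ?_ (norm_nonneg _)
  refine le_of_forall_pos_le_add fun ε hε => ?_
  rw [zero_add]
  -- vanishing criterion
  obtain ⟨s, hs⟩ := summable_iff_vanishing.mp hb1 (Metric.ball 0 ε) (Metric.ball_mem_nhds _ hε)
  set N : ℕ := (s.sup fun n => (n - m).natAbs) + 1 with hNdef
  have hN0 : N ≠ 0 := Nat.succ_ne_zero _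
  have hNC : (N : ℂ) ≠ 0 := Nat.cast_ne_zero.mpr hN0
  have hNs : ∀ n ∈ s, (n - m).natAbs < N := fun n hn =>
    Nat.lt_succ_of_le (Finset.le_sup (f := fun k => (k - m).natAbs) hn)
  set ζ : ℂ := Complex.exp (2 * Real.pi * Complex.I / N) with hζdef
  have hζ : IsPrimitiveRoot ζ N := Complex.isPrimitiveRoot_exp N hN0
  have hζN : ζ ^ N = 1 := hζ.pow_eq_one
  have hζnorm : ‖ζ‖ = 1 := by
    refine norm_one_of_pow_eq_one (norm_nonneg ζ) hN0 ?_
    rw [← norm_pow, hζN, norm_one]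
  have hζ0 : ζ ≠ 0 := hζ.ne_zero hN0
  have hζknorm : ∀ k : ℕ, ‖(ζ : ℂ) ^ k‖ = 1 := by
    intro k; rw [norm_pow, hζnorm, one_pow]
  -- the indicator set
  set S : Set ℤ := {n : ℤ | (N : ℤ) ∣ (n - m)} with hSdef
  -- the key averaging identity
  have key : (0 : A) = (N : ℂ) • ∑' n : ℤ, S.indicator b n := by
    have hsummk : ∀ k : ℕ, Summable fun n : ℤ => ζ ^ ((n - m) * (k : ℤ)) • b n := by
      intro k
      have h1 : Summable fun n : ℤ => ζ ^ (-(m * (k : ℤ))) • (((ζ : ℂ) ^ k) ^ (n : ℤ) • b n) :=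
        (hb (ζ ^ k) (hζknorm k)).const_smul _
      refine h1.congr fun n => ?_
      rw [smul_smul, ← zpow_natCast ζ k, ← zpow_mul, ← zpow_add₀ hζ0]
      ring_nf
    calc (0 : A) = ∑ k ∈ Finset.range N, ζ ^ (-(m * (k : ℤ))) •
        ∑' n : ℤ, ((ζ : ℂ) ^ k) ^ (n : ℤ) • b n := by
          simp [fun k : ℕ => h0 ((ζ : ℂ) ^ k) (hζknorm k)]
      _ = ∑ k ∈ Finset.range N, ∑' n : ℤ, ζ ^ ((n - m) * (k : ℤ)) • b n := by
          refine Finset.sum_congr rfl fun k _ => ?_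
          rw [← Summable.tsum_const_smul _ (hb (ζ ^ k) (hζknorm k))]
          refine tsum_congr fun n => ?_
          rw [smul_smul, ← zpow_natCast ζ k, ← zpow_mul, ← zpow_add₀ hζ0]
          ring_nf
      _ = ∑' n : ℤ, ∑ k ∈ Finset.range N, ζ ^ ((n - m) * (k : ℤ)) • b n := by
          rw [Summable.tsum_finsetSum fun k _ => hsummk k]
      _ = ∑' n : ℤ, (∑ k ∈ Finset.range N, ζ ^ ((n - m) * (k : ℤ))) • b n := by
          refine tsum_congr fun n => ?_
          rw [Finset.sum_smul]
      _ = ∑' n : ℤ, (N : ℂ) • S.indicator b n := by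
          refine tsum_congr fun n => ?_
          rw [root_sum hN0 hζ (n - m)]
          by_cases hn : (N : ℤ) ∣ (n - m)
          · rw [if_pos hn, Set.indicator_of_mem (show n ∈ S from hn)]
          · rw [if_neg hn, Set.indicator_of_notMem (show n ∉ S from hn), zero_smul, smul_zero]
      _ = (N : ℂ) • ∑' n : ℤ, S.indicator b n := by
          exact Summable.tsum_const_smul _ (hb1.indicator S)
  have hT : ∑' n : ℤ, S.indicator b n = 0 := by
    rcases smul_eq_zero.mp key.symm with h | h
    · exact absurd h hNC
    · exact h
  -- split off the n = m term
  have hmS : m ∈ S := by simp [hSdef]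
  have hsplit : (fun n => S.indicator b n)
      = (fun n => Set.indicator {m} b n) + fun n => Set.indicator (S \ {m}) b n := by
    funext n
    by_cases h1 : n = m
    · subst h1
      simp [Set.indicator_of_mem hmS, Set.indicator_of_mem (Set.mem_singleton n)]
    · simp only [Pi.add_apply]
      rw [Set.indicator_of_notMem (by simp [h1] : n ∉ ({m} : Set ℤ))]
      by_cases h2 : n ∈ S
      · rw [Set.indicator_of_mem h2, Set.indicator_of_mem ((Set.mem_diff n).mpr ⟨h2, by simp [h1]⟩), zero_add]
      · rw [Set.indicator_of_notMem h2, Set.indicator_of_notMem (fun h => h2 h.1), zero_add]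
  have hsum1 : Summable fun n => Set.indicator {m} b n := hb1.indicator _
  have hsum2 : Summable fun n => Set.indicator (S \ {m}) b n := hb1.indicator _
  have htsum1 : ∑' n : ℤ, Set.indicator {m} b n = b m := by
    rw [tsum_eq_single m]
    · exact Set.indicator_of_mem (Set.mem_singleton m) b
    · intro n hn
      exact Set.indicator_of_notMem (by simp [hn]) b
  have hsplit2 : b m + ∑' n : ℤ, Set.indicator (S \ {m}) b n = 0 := by
    rw [← htsum1, ← Summable.tsum_add hsum1 hsum2, ← hT]
    exact congrArg tsum hsplit.symm
  have hbm : b m = -∑' n : ℤ, Set.indicator (S \ {m}) b n :=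
    eq_neg_of_add_eq_zero_left hsplit2
  rw [hbm, norm_neg]
  -- bound the tail sum
  have hR := hsum2.hasSum
  have htend : Filter.Tendsto (fun t : Finset ℤ => ‖∑ n ∈ t, Set.indicator (S \ {m}) b n‖)
      Filter.atTop (nhds ‖∑' n : ℤ, Set.indicator (S \ {m}) b n‖) := hR.norm
  refine le_of_tendsto htend (Filter.Eventually.of_forall fun t => ?_)
  have hfilter : ∑ n ∈ t, Set.indicator (S \ {m}) b n
      = ∑ n ∈ t.filter (fun n => n ∈ S \ {m}), b n := by
    rw [Finset.sum_filter]
    refine Finset.sum_congr rfl fun n _ => ?_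
    by_cases hn : n ∈ S \ {m}
    · rw [Set.indicator_of_mem hn, if_pos hn]
    · rw [Set.indicator_of_notMem hn, if_neg hn]
  have hdisj : Disjoint (t.filter (fun n => n ∈ S \ {m})) s := by
    rw [Finset.disjoint_left]
    intro n hn hns
    obtain ⟨hnS, hnm⟩ := Finset.mem_filter.mp hn |>.2
    have hnm' : n ≠ m := by simpa using hnm
    have hdvd : N ∣ (n - m).natAbs :=
      Int.natCast_dvd_natCast.mp (Int.dvd_natAbs.mpr hnS)
    have hpos : 0 < (n - m).natAbs := Int.natAbs_pos.mpr (sub_ne_zero.mpr hnm')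
    have hle : N ≤ (n - m).natAbs := Nat.le_of_dvd hpos hdvd
    exact absurd (hNs n hns) (not_lt.mpr hle)
  rw [hfilter]
  exact le_of_lt (mem_ball_zero_iff.mp (hs _ hdisj))


section helpers

variable {A : Type*} [NormedRing A] [NormedSpace ℂ A] [CompleteSpace A] [StarRing A]
  [NormedStarGroup A] [StarModule ℂ A]

/-- The star of the series `∑ zⁿ • a n` is the series `∑ zⁿ • star (a (-n))`. -/
lemma star_series (a : ℤ → A) {z : ℂ} (hz : ‖z‖ = 1)
    (h : Summable fun n : ℤ => z ^ n • a n) :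
    Summable (fun n : ℤ => z ^ n • star (a (-n))) ∧
      ∑' n : ℤ, z ^ n • star (a (-n)) = star (∑' n : ℤ, z ^ n • a n) := by
  have hz0 : z ≠ 0 := fun h => by simp [h] at hz
  have h1 : Summable fun n : ℤ => star (z ^ n • a n) := h.star
  have he : (fun n : ℤ => z ^ n • star (a (-n)))
      = (fun n : ℤ => star (z ^ n • a n)) ∘ (Equiv.neg ℤ) := by
    funext n
    simp only [Function.comp_apply, Equiv.neg_apply, star_smul]
    congr 1
    rw [RCLike.star_def, map_zpow₀, ← Complex.inv_eq_conj hz, inv_zpow, ← zpow_neg, neg_neg]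
  constructor
  · rw [he]
    exact ((Equiv.neg ℤ).summable_iff (f := fun n : ℤ => star (z ^ n • a n))).mpr h1
  · rw [he]
    rw [show ((fun n : ℤ => star (z ^ n • a n)) ∘ (Equiv.neg ℤ))
      = fun c : ℤ => (fun n : ℤ => star (z ^ n • a n)) ((Equiv.neg ℤ) c) from rfl]
    rw [(Equiv.neg ℤ).tsum_eq (fun n : ℤ => star (z ^ n • a n)), ← tsum_star]

end helpers

/-- Rigidity of quantum isometric actions on the circle: if `F(z) = Σ_{n∈ℤ} zⁿ aₙ` is unitary
for each `z ∈ S¹` and `F(z)F(w)* + F(z)*F(w) = (z·conj w + conj z·w)·1`, then `aₙ = 0` for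
`n ∉ {1, -1}`, so `F(z) = z·a₁ + conj(z)·a₋₁`. -/
theorem quantum_isometry_circle_linearity
    {A : Type*} [CStarAlgebra A] (a : ℤ → A)
    (hsum : ∀ z : ℂ, ‖z‖ = 1 → Summable fun n : ℤ => z ^ n • a n)
    (F : ℂ → A) (hF : ∀ z : ℂ, ‖z‖ = 1 → F z = ∑' n : ℤ, z ^ n • a n)
    (hunit : ∀ z : ℂ, ‖z‖ = 1 → F z ∈ unitary A)
    (hiso : ∀ z w : ℂ, ‖z‖ = 1 → ‖w‖ = 1 →
      F z * star (F w) + star (F z) * F w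
        = (z * (starRingEnd ℂ) w + (starRingEnd ℂ) z * w) • (1 : A)) :
    (∀ n : ℤ, n ≠ 1 → n ≠ -1 → a n = 0) ∧
    (∀ z : ℂ, ‖z‖ = 1 → F z = z • a 1 + (starRingEnd ℂ) z • a (-1)) := by
  classical
  -- Step 1 : single Fourier extraction in `z`
  have step1 : ∀ w : ℂ, ‖w‖ = 1 → ∀ n : ℤ,
      a n * star (F w) + star (a (-n)) * F w
        = ((if n = 1 then (starRingEnd ℂ) w else 0) + (if n = -1 then w else 0)) • (1 : A) := by
    intro w hw n
    set b : ℤ → A := fun n => a n * star (F w) + star (a (-n)) * F w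
      - ((if n = 1 then (starRingEnd ℂ) w else 0) + (if n = -1 then w else 0)) • (1 : A)
      with hbdef
    have hdelta : ∀ z : ℂ, ‖z‖ = 1 →
        (∑' n : ℤ, z ^ n • (((if n = 1 then (starRingEnd ℂ) w else 0)
            + (if n = -1 then w else 0)) • (1 : A)))
          = (z * (starRingEnd ℂ) w + (starRingEnd ℂ) z * w) • (1 : A) := by
      intro z hz
      rw [tsum_eq_sum (s := ({1, -1} : Finset ℤ)) (by
        intro n hn
        have h1 : n ≠ 1 := fun h => hn (by simp [h])
        have h2 : n ≠ -1 := fun h => hn (by simp [h])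
        simp [h1, h2])]
      rw [Finset.sum_pair (by norm_num : (1 : ℤ) ≠ -1)]
      simp only [if_pos rfl, if_neg (by norm_num : (1 : ℤ) ≠ -1),
        if_neg (by norm_num : (-1 : ℤ) ≠ 1), add_zero, zero_add]
      rw [zpow_one, zpow_neg_one, Complex.inv_eq_conj hz]
      rw [smul_smul, smul_smul, ← add_smul]
      norm_num
    have hdeltas : ∀ z : ℂ, Summable fun n : ℤ =>
        z ^ n • (((if n = 1 then (starRingEnd ℂ) w else 0)
          + (if n = -1 then w else 0)) • (1 : A)) := by
      intro z
      apply summable_of_ne_finset_zero (s := ({1, -1} : Finset ℤ))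
      intro n hn
      have h1 : n ≠ 1 := fun h => hn (by simp [h])
      have h2 : n ≠ -1 := fun h => hn (by simp [h])
      simp [h1, h2]
    have hbsum : ∀ z : ℂ, ‖z‖ = 1 → Summable fun n : ℤ => z ^ n • b n := by
        intro z hz
        have hexp : (fun n : ℤ => z ^ n • b n)
            = fun n : ℤ => ((z ^ n • a n) * star (F w) + (z ^ n • star (a (-n))) * F w)
              - z ^ n • (((if n = 1 then (starRingEnd ℂ) w else 0)
                + (if n = -1 then w else 0)) • (1 : A)) := by
          funext n
          simp only [hbdef, smul_sub, smul_add, smul_mul_assoc]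
        rw [hexp]
        exact (((hsum z hz).mul_right _).add ((star_series a hz (hsum z hz)).1.mul_right _)).sub
          (hdeltas z)
    have hbzero : ∀ z : ℂ, ‖z‖ = 1 → ∑' n : ℤ, z ^ n • b n = 0 := by
        intro z hz
        have hexp : (fun n : ℤ => z ^ n • b n)
            = fun n : ℤ => ((z ^ n • a n) * star (F w) + (z ^ n • star (a (-n))) * F w)
              - z ^ n • (((if n = 1 then (starRingEnd ℂ) w else 0)
                + (if n = -1 then w else 0)) • (1 : A)) := by
          funext n
          simp only [hbdef, smul_sub, smul_add, smul_mul_assoc]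
        rw [hexp]
        rw [Summable.tsum_sub (((hsum z hz).mul_right _).add
          ((star_series a hz (hsum z hz)).1.mul_right _)) (hdeltas z)]
        rw [Summable.tsum_add ((hsum z hz).mul_right _) ((star_series a hz (hsum z hz)).1.mul_right _)]
        rw [(hsum z hz).tsum_mul_right, (star_series a hz (hsum z hz)).1.tsum_mul_right]
        rw [(star_series a hz (hsum z hz)).2, hdelta z hz, ← hF z hz]
        rw [sub_eq_zero, hiso z w hz hw]
    have hb0 : ∀ m : ℤ, b m = 0 := fourier_extract b hbsum hbzero
    have := hb0 n
    rw [hbdef] at this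
    simpa [sub_eq_zero] using this
  -- Step 2 : second Fourier extraction in `w`, for `n ∉ {1, -1}`
  have step2 : ∀ n : ℤ, n ≠ 1 → n ≠ -1 → a n = 0 := by
    intro n hn1 hn2
    set c : ℤ → A := fun m => a n * star (a (-m)) + star (a (-n)) * a m with hcdef
    have hcsum : ∀ w : ℂ, ‖w‖ = 1 → Summable fun m : ℤ => w ^ m • c m := by
        intro w hw
        have hexp : (fun m : ℤ => w ^ m • c m)
            = fun m : ℤ => a n * (w ^ m • star (a (-m))) + star (a (-n)) * (w ^ m • a m) := by
          funext m
          simp only [hcdef, smul_add, mul_smul_comm]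
        rw [hexp]
        exact ((star_series a hw (hsum w hw)).1.mul_left _).add ((hsum w hw).mul_left _)
    have hczero : ∀ w : ℂ, ‖w‖ = 1 → ∑' m : ℤ, w ^ m • c m = 0 := by
        intro w hw
        have hexp : (fun m : ℤ => w ^ m • c m)
            = fun m : ℤ => a n * (w ^ m • star (a (-m))) + star (a (-n)) * (w ^ m • a m) := by
          funext m
          simp only [hcdef, smul_add, mul_smul_comm]
        rw [hexp]
        rw [Summable.tsum_add ((star_series a hw (hsum w hw)).1.mul_left _) ((hsum w hw).mul_left _)]
        rw [(star_series a hw (hsum w hw)).1.tsum_mul_left, (hsum w hw).tsum_mul_left]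
        rw [(star_series a hw (hsum w hw)).2, ← hF w hw]
        have := step1 w hw n
        rw [if_neg hn1, if_neg hn2] at this
        simpa using this
    have hc0 : ∀ m : ℤ, c m = 0 := fourier_extract c hcsum hczero
    have hkey := hc0 (-n)
    rw [hcdef] at hkey
    simp only [neg_neg] at hkey
    letI := CStarAlgebra.spectralOrder A
    haveI := CStarAlgebra.spectralOrderedRing A
    have h1 : (0 : A) ≤ a n * star (a n) := mul_star_self_nonneg (a n)
    have h2 : (0 : A) ≤ star (a (-n)) * a (-n) := star_mul_self_nonneg (a (-n))
    have := (add_eq_zero_iff_of_nonneg h1 h2).mp hkey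
    exact (CStarRing.mul_star_self_eq_zero_iff (a n)).mp this.1
  refine ⟨step2, fun z hz => ?_⟩
  rw [hF z hz]
  rw [tsum_eq_sum (s := ({1, -1} : Finset ℤ)) (by
    intro n hn
    have h1 : n ≠ 1 := fun h => hn (by simp [h])
    have h2 : n ≠ -1 := fun h => hn (by simp [h])
    rw [step2 n h1 h2, smul_zero])]
  rw [Finset.sum_pair (by norm_num : (1 : ℤ) ≠ -1)]
  rw [zpow_one, zpow_neg_one, Complex.inv_eq_conj hz]
end

section
/- Let A be a unital C*-algebra, S a finite set, и let (a_{I,J})_{I,J∈S} be a magic unitary in A whose entries are self-adjoint projections. Let (b_{(I,ε),(J,δ)})_{I,J∈S, ε,δ∈{1,2}} be a magic unitary in A indexed by S × {1,2} whose entries are self-adjoint projections, and assume the compatibility relations a_{I,J} = b_{(I,1),(J,1)} + b_{(I,2),(J,1)} = b_{(I,1),(J,2)} + b_{(I,2),(J,2)} hold for all I, J ∈ S. Then for all I, J ∈ S one has b_{(I,2),(J,1)} = b_{(I,1),(J,2)} and b_{(I,1),(J,1)} = b_{(I,2),(J,2)} = a_{I,J} − b_{(I,1),(J,2)}. -/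
open Finset in
lemma proj_orth_of_sum_eq_one {A : Type*} [CStarAlgebra A] {T : Type*} [Fintype T]
    (c : T → A) (hsa : ∀ t, IsSelfAdjoint (c t)) (hidem : ∀ t, IsIdempotentElem (c t))
    (hsum : ∑ t, c t = 1) {i j : T} (hij : i ≠ j) : c i * c j = 0 := by
  classical
  let _ := CStarAlgebra.spectralOrder A
  have _ := CStarAlgebra.spectralOrderedRing A
  have hpos : ∀ t, (0 : A) ≤ c t := fun t => by
    have := star_mul_self_nonneg (c t)
    rwa [(hsa t).star_eq, hidem t] at this
  have hle : c i + c j ≤ 1 := by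
    have hj : j ∈ (univ : Finset T).erase i := mem_erase.2 ⟨hij.symm, mem_univ j⟩
    have h1 : c i + (c j + ∑ t ∈ ((univ : Finset T).erase i).erase j, c t) = 1 := by
      rw [Finset.add_sum_erase _ c hj, Finset.add_sum_erase _ c (mem_univ i), hsum]
    calc c i + c j ≤ c i + (c j + ∑ t ∈ ((univ : Finset T).erase i).erase j, c t) := by
          rw [← add_assoc]
          exact le_add_of_nonneg_right (Finset.sum_nonneg fun t _ => hpos t)
      _ = 1 := h1
  have h0 : (0 : A) ≤ 1 - (c i + c j) := sub_nonneg.2 hle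
  have h1 : (0 : A) ≤ c j * (1 - (c i + c j)) * c j := by
    have := star_left_conjugate_nonneg h0 (c j)
    rwa [(hsa j).star_eq] at this
  have h2 : c j * (1 - (c i + c j)) * c j = -(c j * c i * c j) := by
    have hj : c j * c j = c j := hidem j
    calc c j * (1 - (c i + c j)) * c j
        = c j * c j - c j * c i * c j - c j * c j * c j := by noncomm_ring
      _ = -(c j * c i * c j) := by rw [hj, hj]; abel
  have h3 : (0 : A) ≤ c j * c i * c j := by
    have := star_mul_self_nonneg (c i * c j)
    rwa [star_mul, (hsa i).star_eq, (hsa j).star_eq, mul_assoc, ← mul_assoc (c i), hidem i,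
      ← mul_assoc] at this
  have h4 : c j * c i * c j = 0 := by
    refine le_antisymm ?_ h3
    rw [h2] at h1
    exact neg_nonneg.mp h1
  have h5 : ‖c i * c j‖ * ‖c i * c j‖ = 0 := by
    rw [← CStarRing.norm_star_mul_self, star_mul, (hsa i).star_eq, (hsa j).star_eq,
      mul_assoc, ← mul_assoc (c i), hidem i, ← mul_assoc, h4, norm_zero]
  rw [← norm_eq_zero]
  exact mul_self_eq_zero.mp h5

/-- If `(a_{I,J})` is a magic unitary of self-adjoint projections indexed by `S` and
`(b_{(I,ε),(J,δ)})` is a magic unitary of self-adjoint projections indexed by `S × Fin 2`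
(with `ε = 0, 1` playing the role of `ε = 1, 2`), satisfying the compatibility relations
`a_{I,J} = b_{(I,0),(J,0)} + b_{(I,1),(J,0)} = b_{(I,0),(J,1)} + b_{(I,1),(J,1)}`, then
`b_{(I,1),(J,0)} = b_{(I,0),(J,1)}` and
`b_{(I,0),(J,0)} = b_{(I,1),(J,1)} = a_{I,J} - b_{(I,0),(J,1)}`. -/
theorem cantor_magic_unitary_relations
    {A : Type*} [CStarAlgebra A] {S : Type*} [Fintype S]
    (a : S → S → A)
    (ha_sa : ∀ I J, IsSelfAdjoint (a I J))
    (ha_idem : ∀ I J, IsIdempotentElem (a I J))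
    (ha_row : ∀ I, ∑ J, a I J = 1)
    (ha_col : ∀ J, ∑ I, a I J = 1)
    (b : S × Fin 2 → S × Fin 2 → A)
    (hb_sa : ∀ p q, IsSelfAdjoint (b p q))
    (hb_idem : ∀ p q, IsIdempotentElem (b p q))
    (hb_row : ∀ p, ∑ q, b p q = 1)
    (hb_col : ∀ q, ∑ p, b p q = 1)
    (hcompat : ∀ I J, a I J = b (I, 0) (J, 0) + b (I, 1) (J, 0) ∧
                      a I J = b (I, 0) (J, 1) + b (I, 1) (J, 1)) :
    ∀ I J, b (I, 1) (J, 0) = b (I, 0) (J, 1) ∧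
           b (I, 0) (J, 0) = b (I, 1) (J, 1) ∧
           b (I, 0) (J, 0) = a I J - b (I, 0) (J, 1) := by
  intro I J
  set p := b (I, 0) (J, 0) with hp
  set q := b (I, 1) (J, 0) with hq
  set r := b (I, 0) (J, 1) with hr
  set s := b (I, 1) (J, 1) with hs
  have hne01 : ∀ K : S, ((K, 0) : S × Fin 2) ≠ (K, 1) := fun K h => by
    simpa using congrArg Prod.snd h
  -- column (J,0): p ⟂ q
  have hqp : q * p = 0 :=
    proj_orth_of_sum_eq_one (fun P => b P (J, 0)) (fun t => hb_sa t _) (fun t => hb_idem t _)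
      (hb_col (J, 0)) (hne01 I).symm
  -- column (J,1): r ⟂ s
  have hsr : s * r = 0 :=
    proj_orth_of_sum_eq_one (fun P => b P (J, 1)) (fun t => hb_sa t _) (fun t => hb_idem t _)
      (hb_col (J, 1)) (hne01 I).symm
  have hrs : r * s = 0 :=
    proj_orth_of_sum_eq_one (fun P => b P (J, 1)) (fun t => hb_sa t _) (fun t => hb_idem t _)
      (hb_col (J, 1)) (hne01 I)
  -- row (I,0): p ⟂ r
  have hpr : p * r = 0 :=
    proj_orth_of_sum_eq_one (b (I, 0)) (hb_sa _) (hb_idem _) (hb_row (I, 0)) (hne01 J)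
  -- row (I,1): q ⟂ s
  have hsq : s * q = 0 :=
    proj_orth_of_sum_eq_one (b (I, 1)) (hb_sa _) (hb_idem _) (hb_row (I, 1)) (hne01 J).symm
  have hpp : p * p = p := hb_idem _ _
  have hss : s * s = s := hb_idem _ _
  have heq : p + q = r + s := ((hcompat I J).1).symm.trans (hcompat I J).2
  have hrp : r * p = 0 :=
    proj_orth_of_sum_eq_one (b (I, 0)) (hb_sa _) (hb_idem _) (hb_row (I, 0)) (hne01 J).symm
  -- p = s * p
  have h1 : p = s * p := by
    have := congrArg (fun x => x * p) heq
    simpa [add_mul, hqp, hpp, hrp] using this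
  -- s * p = s
  have h2 : s * p = s := by
    have := congrArg (fun x => s * x) heq
    simpa [mul_add, hsq, hsr, hss] using this
  have hps : p = s := h1.trans h2
  have hqr : q = r := by
    have : p + q = p + r := by rw [heq, hps, add_comm]
    exact add_left_cancel this
  refine ⟨hqr, hps, ?_⟩
  have ha2 : a I J = r + s := (hcompat I J).2
  rw [eq_sub_iff_add_eq, ha2, hps, add_comm]
end

section
/- Let A be a unital C*-algebra, S a finite set, (a_{I,J})_{I,J∈S} a magic unitary in A whose entries are self-adjoint projections, and for each I, J ∈ S let c_{I,J} ∈ A be a self-adjoint projection with c_{I,J} ≤ a_{I,J} (i.e. c_{I,J}·a_{I,J} = c_{I,J}). Define a family indexed by S × {1,2} by b_{(I,1),(J,1)} = b_{(I,2),(J,2)} = c_{I,J} and b_{(I,2),(J,1)} = b_{(I,1),(J,2)} = a_{I,J} − c_{I,J}. Then every b_{(I,ε),(J,δ)} is a self-adjoint projection and (b_{(I,ε),(J,δ)}) is a magic unitary indexed by S × {1,2}; moreover a_{I,J} = b_{(I,1),(J,1)} + b_{(I,2),(J,1)} = b_{(I,1),(J,2)} + b_{(I,2),(J,2)} for all I,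 J ∈ S. -/
/-- Converse construction: given a magic unitary `(a_{I,J})` of self-adjoint projections and
subprojections `c_{I,J} ≤ a_{I,J}`, the family `b` defined by
`b_{(I,ε),(J,δ)} = c_{I,J}` if `ε = δ` and `a_{I,J} - c_{I,J}` otherwise is a magic unitary of
self-adjoint projections indexed by `S × Fin 2`, satisfying the compatibility relations
`a_{I,J} = b_{(I,0),(J,0)} + b_{(I,1),(J,0)} = b_{(I,0),(J,1)} + b_{(I,1),(J,1)}`. -/
theorem cantor_magic_unitary_construction
    {A : Type*} [CStarAlgebra A] {S : Type*} [Fintype S]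
    (a : S → S → A)
    (ha_sa : ∀ I J, IsSelfAdjoint (a I J))
    (ha_idem : ∀ I J, IsIdempotentElem (a I J))
    (ha_row : ∀ I, ∑ J, a I J = 1)
    (ha_col : ∀ J, ∑ I, a I J = 1)
    (c : S → S → A)
    (hc_sa : ∀ I J, IsSelfAdjoint (c I J))
    (hc_idem : ∀ I J, IsIdempotentElem (c I J))
    (hc_le : ∀ I J, c I J * a I J = c I J)
    (b : S × Fin 2 → S × Fin 2 → A)
    (hb : ∀ (I J : S) (ε δ : Fin 2),
      b (I, ε) (J, δ) = if ε = δ then c I J else a I J - c I J) :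
    (∀ p q, IsSelfAdjoint (b p q)) ∧
    (∀ p q, IsIdempotentElem (b p q)) ∧
    (∀ p, ∑ q, b p q = 1) ∧
    (∀ q, ∑ p, b p q = 1) ∧
    (∀ I J, a I J = b (I, 0) (J, 0) + b (I, 1) (J, 0) ∧
            a I J = b (I, 0) (J, 1) + b (I, 1) (J, 1)) := by
  have hac : ∀ I J, a I J * c I J = c I J := by
    intro I J
    have := congrArg star (hc_le I J)
    rwa [star_mul, (hc_sa I J).star_eq, (ha_sa I J).star_eq] at this
  have hsub_sa : ∀ I J, IsSelfAdjoint (a I J - c I J) := fun I J =>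
    (ha_sa I J).sub (hc_sa I J)
  have hsub_idem : ∀ I J, IsIdempotentElem (a I J - c I J) := by
    intro I J
    unfold IsIdempotentElem
    have := ha_idem I J
    have hc := hc_idem I J
    rw [sub_mul, mul_sub, mul_sub, (ha_idem I J), hac, hc_le, hc_idem]
    abel
  refine ⟨?_, ?_, ?_, ?_, ?_⟩
  · rintro ⟨I, ε⟩ ⟨J, δ⟩
    rw [hb]
    split
    · exact hc_sa I J
    · exact hsub_sa I J
  · rintro ⟨I, ε⟩ ⟨J, δ⟩
    rw [hb]
    split
    · exact hc_idem I J
    · exact hsub_idem I J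
  · rintro ⟨I, ε⟩
    rw [Fintype.sum_prod_type]
    have : ∀ J : S, ∑ δ : Fin 2, b (I, ε) (J, δ) = a I J := by
      intro J
      rw [Fin.sum_univ_two, hb, hb]
      fin_cases ε <;> simp <;> abel
    simp only [this]
    exact ha_row I
  · rintro ⟨J, δ⟩
    rw [Fintype.sum_prod_type]
    have : ∀ I : S, ∑ ε : Fin 2, b (I, ε) (J, δ) = a I J := by
      intro I
      rw [Fin.sum_univ_two, hb, hb]
      fin_cases δ <;> simp <;> abel
    simp only [this]
    exact ha_col J
  · intro I J
    constructor <;> rw [hb, hb] <;> simp <;> abel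
end

section
/- Let A be a unital (not necessarily commutative) ring, V and W finite sets, and π : W → V a map. Let (q_{ij})_{i,j∈V} and (q'_{kp})_{k,p∈W} be families of elements of A such that Σ_{j∈V} q_{ij} = 1 for every i ∈ V and Σ_{k∈W} q'_{kp} = 1 for every p ∈ W. Assume that: (1) q_{ij}·q'_{kp} = 0 whenever π(k) = i and π(p) ≠ j; and (2) q_{ij}·q'_{kp} = 0 whenever π(k) ≠ i and π(p) = j. Then for every i ∈ V and p ∈ W one has Σ_{k∈W : π(k)=i} q'_{kp} = q_{i,π(p)}. -/
/-- The key computation in the proof that a quantum symmetry of a Bratteli diagram intertwines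
the level embeddings: if `Σ_j q_{ij} = 1`, `Σ_k q'_{kp} = 1`, and the orthogonality relations
(1) `q_{ij} q'_{kp} = 0` whenever `π(k) = i` and `π(p) ≠ j`, and
(2) `q_{ij} q'_{kp} = 0` whenever `π(k) ≠ i` and `π(p) = j` hold, then
`Σ_{k : π(k) = i} q'_{kp} = q_{i, π(p)}`. -/
theorem bratteli_quantum_symmetry_intertwines
    {A : Type*} [Ring A]
    {V W : Type*} [Fintype V] [Fintype W] [DecidableEq V]
    (π : W → V) (q : V → V → A) (q' : W → W → A)
    (hqrow : ∀ i : V, ∑ j : V, q i j = 1)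
    (hq'col : ∀ p : W, ∑ k : W, q' k p = 1)
    (h1 : ∀ (i j : V) (k p : W), π k = i → π p ≠ j → q i j * q' k p = 0)
    (h2 : ∀ (i j : V) (k p : W), π k ≠ i → π p = j → q i j * q' k p = 0) :
    ∀ (i : V) (p : W), ∑ k ∈ Finset.univ.filter (fun k => π k = i), q' k p = q i (π p) := by
  intro i p
  have lhs : ∑ k ∈ Finset.univ.filter (fun k => π k = i), q' k p
      = ∑ k ∈ Finset.univ.filter (fun k => π k = i), q i (π p) * q' k p := by
    refine Finset.sum_congr rfl fun k hk => ?_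
    simp only [Finset.mem_filter] at hk
    have key : ∑ j : V, q i j * q' k p = q i (π p) * q' k p :=
      Finset.sum_eq_single (π p) (fun j _ hj => h1 i j k p hk.2 (Ne.symm hj))
        (fun h => absurd (Finset.mem_univ _) h)
    rw [← key, ← Finset.sum_mul, hqrow, one_mul]
  have rhs : q i (π p) = ∑ k ∈ Finset.univ.filter (fun k => π k = i), q i (π p) * q' k p := by
    conv_lhs => rw [← mul_one (q i (π p)), ← hq'col p, Finset.mul_sum]
    rw [← Finset.sum_filter_add_sum_filter_not Finset.univ (fun k => π k = i)]
    have h0 : ∑ k ∈ Finset.univ.filter (fun k => ¬ π k = i), q i (π p) * q' k p = 0 := by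
      refine Finset.sum_eq_zero fun k hk => ?_
      simp only [Finset.mem_filter] at hk
      exact h2 i (π p) k p hk.2 rfl
    rw [h0, add_zero]
  rw [lhs]; exact rhs.symm
end

section
/- Let A be a unital C*-algebra, n ≥ 1, and let (q_{ij})_{i,j∈{1,…,n}} be a magic unitary in A whose entries are self-adjoint projections. Let d : {1,…,n} × {1,…,n} → ℝ be any function. Then the following two conditions are equivalent: (a) for all k, l: Σ_i d(i,l)·q_{ki} = Σ_i d(k,i)·q_{il}; (b) for all k, l: d(k,l)·1 = Σ_{i,j} d(i,j)·q_{ki}·q_{lj}. -/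
/-!
Write `Q = (q_{ij})` and `D = (d(i,j) • 1)` as matrices over `A`. Condition (a) says `Q D = D Q`
and condition (b) says `D = Q D Qᵀ`. The projections in a row (or column) of a magic unitary sum
to `1`, hence are mutually orthogonal, so `Qᵀ` is a two-sided inverse of `Q` and the two
conditions are equivalent.
-/

open Finset Matrix

section

variable {ι A : Type*} [Fintype ι]

-- `p i ≤ ∑_{k ≠ j} p k = 1 - p j`, and a positive element `a` below a projection `e` has
-- `a * e = a`.
lemma IsStarProjection.mul_eq_zero_of_sum_eq_one [CStarAlgebra A] [PartialOrder A]
    [StarOrderedRing A] {p : ι → A} (hp : ∀ i, IsStarProjection (p i)) (hsum : ∑ i, p i = 1)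
    {i j : ι} (hij : i ≠ j) : p i * p j = 0 := by
  classical
  have hle : p i ≤ 1 - p j := by
    rw [← hsum, ← add_sum_erase univ p (mem_univ j), add_sub_cancel_left]
    exact single_le_sum (fun k _ => (hp k).nonneg) (mem_erase.mpr ⟨hij, mem_univ i⟩)
  have h := ((hp j).one_sub.mul_right_and_mul_left_of_nonneg_of_le (hp i).nonneg hle).1
  rwa [mul_sub, mul_one, sub_eq_self] at h

structure IsMagicUnitary [Semiring A] [Star A] (q : ι → ι → A) : Prop where
  isStarProjection : ∀ i j, IsStarProjection (q i j)
  sum_row : ∀ i, ∑ j, q i j = 1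
  sum_col : ∀ j, ∑ i, q i j = 1

namespace IsMagicUnitary

variable [CStarAlgebra A] {q : ι → ι → A}

lemma transpose (hq : IsMagicUnitary q) : IsMagicUnitary fun i j => q j i :=
  ⟨fun i j => hq.isStarProjection j i, hq.sum_col, hq.sum_row⟩

lemma mul_eq_zero_of_ne (hq : IsMagicUnitary q) (i : ι) {j j' : ι} (h : j ≠ j') :
    q i j * q i j' = 0 :=
  letI := CStarAlgebra.spectralOrder A
  haveI := CStarAlgebra.spectralOrderedRing A
  IsStarProjection.mul_eq_zero_of_sum_eq_one (hq.isStarProjection i) (hq.sum_row i) h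

variable [DecidableEq ι]

lemma transpose_mul_self (hq : IsMagicUnitary q) : (of q)ᵀ * of q = 1 := by
  ext k l
  rw [mul_apply, one_apply]
  simp only [transpose_apply, of_apply]
  split_ifs with hkl
  · subst hkl
    simp_rw [(hq.isStarProjection _ k).isIdempotentElem.eq]
    exact hq.sum_col k
  · exact sum_eq_zero fun i _ => hq.mul_eq_zero_of_ne i hkl

lemma mul_transpose_self (hq : IsMagicUnitary q) : of q * (of q)ᵀ = 1 :=
  hq.transpose.transpose_mul_self

def toUnits (hq : IsMagicUnitary q) : (Matrix ι ι A)ˣ :=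
  ⟨of q, (of q)ᵀ, hq.mul_transpose_self, hq.transpose_mul_self⟩

end IsMagicUnitary

section ScalarMatrix

variable {R : Type*} [CommSemiring R] [Semiring A] [Algebra R A]
  (Q : Matrix ι ι A) (d : Matrix ι ι R) (k l : ι)

lemma Matrix.mul_map_algebraMap_apply :
    (Q * d.map (algebraMap R A)) k l = ∑ i, d i l • Q k i := by
  simp [mul_apply, Algebra.smul_def, Algebra.commutes]

lemma Matrix.map_algebraMap_mul_apply :
    (d.map (algebraMap R A) * Q) k l = ∑ i, d k i • Q i l := by
  simp [mul_apply, Algebra.smul_def]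

lemma Matrix.mul_map_algebraMap_mul_transpose_apply :
    (Q * d.map (algebraMap R A) * Qᵀ) k l = ∑ i, ∑ j, d i j • (Q k i * Q l j) := by
  rw [mul_apply, sum_comm]
  simp [mul_map_algebraMap_apply, sum_mul]

end ScalarMatrix

end

theorem banica_isometry_condition_equivalence_general
    {A : Type*} [CStarAlgebra A] {n : ℕ}
    (q : Fin n → Fin n → A)
    (hq_sa : ∀ i j, IsSelfAdjoint (q i j))
    (hq_idem : ∀ i j, IsIdempotentElem (q i j))
    (hq_row : ∀ i, ∑ j, q i j = 1)
    (hq_col : ∀ j, ∑ i, q i j = 1)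
    (d : Fin n → Fin n → ℝ) :
    (∀ k l, ∑ i, d i l • q k i = ∑ i, d k i • q i l) ↔
    (∀ k l, d k l • (1 : A) = ∑ i, ∑ j, d i j • (q k i * q l j)) := by
  have hq : IsMagicUnitary q := ⟨fun i j => ⟨hq_idem i j, hq_sa i j⟩, hq_row, hq_col⟩
  set D := (of d).map (algebraMap ℝ A)
  calc (∀ k l, ∑ i, d i l • q k i = ∑ i, d k i • q i l)
      ↔ of q * D = D * of q := by
        simp only [← Matrix.ext_iff, D, mul_map_algebraMap_apply, map_algebraMap_mul_apply,
          of_apply]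
    _ ↔ of q * D * (of q)ᵀ = D := (Units.mul_inv_eq_iff_eq_mul (b := hq.toUnits)).symm
    _ ↔ (∀ k l, d k l • (1 : A) = ∑ i, ∑ j, d i j • (q k i * q l j)) := by
        rw [eq_comm, ← Matrix.ext_iff]
        simp only [D, map_apply, of_apply, mul_map_algebraMap_mul_transpose_apply,
          Algebra.algebraMap_eq_smul_one]

/-- Banica's commutation relation for a quantum isometric action on a finite metric space is
equivalent to the invariance `α⁽²⁾(d) = d ⊗ 1`: for a magic unitary `(q_{ij})` of self-adjoint
projections and any function `d`, one has
`∀ k l, Σ_i d(i,l)·q_{ki} = Σ_i d(k,i)·q_{il}` iff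
`∀ k l, d(k,l)·1 = Σ_{i,j} d(i,j)·q_{ki}·q_{lj}`. -/
theorem banica_isometry_condition_equivalence
    {A : Type*} [CStarAlgebra A] {n : ℕ} (hn : 1 ≤ n)
    (q : Fin n → Fin n → A)
    (hq_sa : ∀ i j, IsSelfAdjoint (q i j))
    (hq_idem : ∀ i j, IsIdempotentElem (q i j))
    (hq_row : ∀ i, ∑ j, q i j = 1)
    (hq_col : ∀ j, ∑ i, q i j = 1)
    (d : Fin n → Fin n → ℝ) :
    (∀ k l, ∑ i, d i l • q k i = ∑ i, d k i • q i l) ↔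
    (∀ k l, d k l • (1 : A) = ∑ i, ∑ j, d i j • (q k i * q l j)) :=
  banica_isometry_condition_equivalence_general q hq_sa hq_idem hq_row hq_col d
end

section
/- Let X be a finite set with at least 2 elements and d : X × X → ℝ a symmetric function (d(i,j) = d(j,i)) with d(i,j) ≠ 0 for i ≠ j, and let Y, H = ℂ² ⊗ ℓ²(Y), D and π be as in the context. Then for all f, g : X → ℂ one has Tr([D,π(f)]* · [D,π(g)]) = 2·Σ_{(i,j)∈Y} conj(f(j) − f(i))·(g(j) − g(i))·d(i,j)^{-2}, which equals 4·Σ_{(i,j)∈Y} g(i)·(conj(f(i)) − conj(f(j)))·d(i,j)^{-2}. -/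
open Matrix

section Aux

variable {X : Type*} [Fintype X] [DecidableEq X]

/-- commutator entry formula -/
lemma aux_comm_apply (d : X → X → ℝ) (f : X → ℂ)
    (σ : Matrix (Fin 2) (Fin 2) ℂ)
    (D : Matrix (Fin 2 × {p : X × X // p.1 ≠ p.2}) (Fin 2 × {p : X × X // p.1 ≠ p.2}) ℂ)
    (hD : ∀ p q : Fin 2 × {p : X × X // p.1 ≠ p.2},
      D p q = if p.2 = q.2 then σ p.1 q.1 * ((d p.2.1.1 p.2.1.2 : ℂ))⁻¹ else 0)
    (Pf : Matrix (Fin 2 × {p : X × X // p.1 ≠ p.2}) (Fin 2 × {p : X × X // p.1 ≠ p.2}) ℂ)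
    (hPf : ∀ p q : Fin 2 × {p : X × X // p.1 ≠ p.2},
      Pf p q = if p = q then (if p.1 = 0 then f p.2.1.1 else f p.2.1.2) else 0) :
    ∀ p q, (D * Pf - Pf * D) p q =
      if p.2 = q.2 then σ p.1 q.1 * ((d p.2.1.1 p.2.1.2 : ℂ))⁻¹ *
        ((if q.1 = 0 then f q.2.1.1 else f q.2.1.2) - (if p.1 = 0 then f p.2.1.1 else f p.2.1.2))
      else 0 := by
  intro p q
  have h : (D * Pf - Pf * D) p q =
      D p q * ((if q.1 = 0 then f q.2.1.1 else f q.2.1.2)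
        - (if p.1 = 0 then f p.2.1.1 else f p.2.1.2)) := by
    simp only [Matrix.sub_apply, Matrix.mul_apply]
    rw [Finset.sum_eq_single q (fun r _ hr => by rw [hPf]; simp [hr, Ne.symm hr]) (by simp),
        Finset.sum_eq_single p (fun r _ hr => by rw [hPf]; simp [Ne.symm hr]) (by simp),
        hPf, hPf]
    simp only [if_pos rfl]
    split_ifs <;> ring
  rw [h, hD]
  split_ifs <;> ring

end Aux

/-- For the natural spectral triple on a finite metric space `(X, d)` (with `d` symmetric),
the trace pairing of commutators satisfies
`Tr([D,π(f)]* [D,π(g)]) = 2·Σ_{(i,j)∈Y} conj(f(j)−f(i))·(g(j)−g(i))·d(i,j)⁻²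
                        = 4·Σ_{(i,j)∈Y} g(i)·(conj(f(i))−conj(f(j)))·d(i,j)⁻²`. -/
theorem trace_of_commutators_on_finite_metric_space
    {X : Type*} [Fintype X] [DecidableEq X] (hX : 2 ≤ Fintype.card X)
    (d : X → X → ℝ) (hd : ∀ i j : X, i ≠ j → d i j ≠ 0)
    (hsymm : ∀ i j : X, d i j = d j i) (f g : X → ℂ)
    (σ : Matrix (Fin 2) (Fin 2) ℂ) (hσ : σ = !![0, Complex.I; -Complex.I, 0])
    (D : Matrix (Fin 2 × {p : X × X // p.1 ≠ p.2}) (Fin 2 × {p : X × X // p.1 ≠ p.2}) ℂ)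
    (hD : ∀ p q : Fin 2 × {p : X × X // p.1 ≠ p.2},
      D p q = if p.2 = q.2 then σ p.1 q.1 * ((d p.2.1.1 p.2.1.2 : ℂ))⁻¹ else 0)
    (Pf Pg : Matrix (Fin 2 × {p : X × X // p.1 ≠ p.2}) (Fin 2 × {p : X × X // p.1 ≠ p.2}) ℂ)
    (hPf : ∀ p q : Fin 2 × {p : X × X // p.1 ≠ p.2},
      Pf p q = if p = q then (if p.1 = 0 then f p.2.1.1 else f p.2.1.2) else 0)
    (hPg : ∀ p q : Fin 2 × {p : X × X // p.1 ≠ p.2},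
      Pg p q = if p = q then (if p.1 = 0 then g p.2.1.1 else g p.2.1.2) else 0) :
    Matrix.trace ((D * Pf - Pf * D)ᴴ * (D * Pg - Pg * D)) =
      2 * ∑ y : {p : X × X // p.1 ≠ p.2},
        (starRingEnd ℂ) (f y.1.2 - f y.1.1) * (g y.1.2 - g y.1.1) *
          (((d y.1.1 y.1.2 : ℂ)) ^ 2)⁻¹ ∧
    Matrix.trace ((D * Pf - Pf * D)ᴴ * (D * Pg - Pg * D)) =
      4 * ∑ y : {p : X × X // p.1 ≠ p.2},
        g y.1.1 * ((starRingEnd ℂ) (f y.1.1) - (starRingEnd ℂ) (f y.1.2)) *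
          (((d y.1.1 y.1.2 : ℂ)) ^ 2)⁻¹ := by
  have hCf := aux_comm_apply d f σ D hD Pf hPf
  have hCg := aux_comm_apply d g σ D hD Pg hPg
  have h1 : Matrix.trace ((D * Pf - Pf * D)ᴴ * (D * Pg - Pg * D)) =
      2 * ∑ y : {p : X × X // p.1 ≠ p.2}, (starRingEnd ℂ) (f y.1.2 - f y.1.1) * (g y.1.2 - g y.1.1) *
          (((d y.1.1 y.1.2 : ℂ)) ^ 2)⁻¹ := by
    rw [Matrix.trace]
    simp only [Matrix.diag_apply, Matrix.mul_apply, Matrix.conjTranspose_apply]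
    calc ∑ p : Fin 2 × {p : X × X // p.1 ≠ p.2}, ∑ q : Fin 2 × {p : X × X // p.1 ≠ p.2},
          star ((D * Pf - Pf * D) q p) * (D * Pg - Pg * D) q p
        = ∑ p : Fin 2 × {p : X × X // p.1 ≠ p.2}, ∑ q : Fin 2 × {p : X × X // p.1 ≠ p.2},
          (if q.2 = p.2 then
            star (σ q.1 p.1 * ((d q.2.1.1 q.2.1.2 : ℂ))⁻¹ *
              ((if p.1 = 0 then f p.2.1.1 else f p.2.1.2) - (if q.1 = 0 then f q.2.1.1 else f q.2.1.2))) *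
            (σ q.1 p.1 * ((d q.2.1.1 q.2.1.2 : ℂ))⁻¹ *
              ((if p.1 = 0 then g p.2.1.1 else g p.2.1.2) - (if q.1 = 0 then g q.2.1.1 else g q.2.1.2)))
          else 0) := by
          refine Finset.sum_congr rfl fun p _ => Finset.sum_congr rfl fun q _ => ?_
          rw [hCf, hCg]
          split_ifs <;> simp
      _ = ∑ y : {p : X × X // p.1 ≠ p.2}, ∑ a : Fin 2, ∑ b : Fin 2,
          (star (σ b a * ((d y.1.1 y.1.2 : ℂ))⁻¹ *
              ((if a = 0 then f y.1.1 else f y.1.2) - (if b = 0 then f y.1.1 else f y.1.2))) *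
            (σ b a * ((d y.1.1 y.1.2 : ℂ))⁻¹ *
              ((if a = 0 then g y.1.1 else g y.1.2) - (if b = 0 then g y.1.1 else g y.1.2)))) := by
          rw [Fintype.sum_prod_type]
          rw [Finset.sum_comm]
          refine Finset.sum_congr rfl fun y _ => ?_
          refine Finset.sum_congr rfl fun a _ => ?_
          rw [Fintype.sum_prod_type, Finset.sum_comm]
          rw [Finset.sum_eq_single y (fun z _ hz => by
            refine Finset.sum_eq_zero fun b _ => ?_
            simp [hz]) (by simp)]
          simp
      _ = ∑ y : {p : X × X // p.1 ≠ p.2}, 2 * ((starRingEnd ℂ) (f y.1.2 - f y.1.1) * (g y.1.2 - g y.1.1) *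
          (((d y.1.1 y.1.2 : ℂ)) ^ 2)⁻¹) := by
          refine Finset.sum_congr rfl fun y _ => ?_
          rw [Fin.sum_univ_two, Fin.sum_univ_two, Fin.sum_univ_two]
          simp only [hσ, Matrix.cons_val', Matrix.cons_val_zero, Matrix.cons_val_one,
            Matrix.head_cons, Matrix.head_fin_const, Matrix.empty_val', Matrix.cons_val_fin_one,
            star_mul', star_sub, map_sub, _root_.map_mul, map_inv₀, Complex.conj_ofReal, Complex.conj_I,
            if_pos rfl]
          norm_num
          ring_nf
          simp only [Complex.I_sq, inv_pow]
          ring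
      _ = 2 * ∑ y : {p : X × X // p.1 ≠ p.2}, (starRingEnd ℂ) (f y.1.2 - f y.1.1) * (g y.1.2 - g y.1.1) *
          (((d y.1.1 y.1.2 : ℂ)) ^ 2)⁻¹ := by rw [Finset.mul_sum]
  refine ⟨h1, ?_⟩
  rw [h1]
  -- swap argument
  have hs : ∑ y : {p : X × X // p.1 ≠ p.2},
        g y.1.1 * ((starRingEnd ℂ) (f y.1.1) - (starRingEnd ℂ) (f y.1.2)) *
          (((d y.1.1 y.1.2 : ℂ)) ^ 2)⁻¹
      = ∑ y : {p : X × X // p.1 ≠ p.2},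
        g y.1.2 * ((starRingEnd ℂ) (f y.1.2) - (starRingEnd ℂ) (f y.1.1)) *
          (((d y.1.1 y.1.2 : ℂ)) ^ 2)⁻¹ := by
    refine Finset.sum_nbij' (fun y => (⟨(y.1.2, y.1.1), Ne.symm y.2⟩ : {p : X × X // p.1 ≠ p.2}))
      (fun y => ⟨(y.1.2, y.1.1), Ne.symm y.2⟩) (by simp) (by simp) (by intro a _; simp)
      (by intro a _; simp) ?_
    intro y _
    simp only []
    rw [hsymm y.1.1 y.1.2]
  have hT : ∀ y : {p : X × X // p.1 ≠ p.2},
      (starRingEnd ℂ) (f y.1.2 - f y.1.1) * (g y.1.2 - g y.1.1) * (((d y.1.1 y.1.2 : ℂ)) ^ 2)⁻¹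
      = g y.1.1 * ((starRingEnd ℂ) (f y.1.1) - (starRingEnd ℂ) (f y.1.2)) * (((d y.1.1 y.1.2 : ℂ)) ^ 2)⁻¹
        + g y.1.2 * ((starRingEnd ℂ) (f y.1.2) - (starRingEnd ℂ) (f y.1.1)) * (((d y.1.1 y.1.2 : ℂ)) ^ 2)⁻¹ := by
    intro y
    simp only [map_sub]
    ring
  rw [Finset.sum_congr rfl fun y _ => hT y, Finset.sum_add_distrib, ← hs]
  ring
end
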